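/- Commutation of conditional rewriting with parallel beta: for a semi-closed, left-linear, right-applicative conditional system R, ←β* ; →A* ⊆ →A* ; ←β* (the reflexive-transitive closures of →A and →β commute). -/

import Mathlib

namespace CondConf

/-- Untyped lambda-terms with constants from `F`, in de Bruijn notation. -/
inductive Tm (F : Type) : Type
  | const : F → Tm F
  | var   : ℕ → Tm F
  | app   : Tm F → Tm F → Tm F
  | lam   : Tm F → Tm F

namespace Tm

variable {F : Type}

/-- Lift (shift) free de Bruijn indices `≥ d` by one. -/
def lift (d : ℕ) : Tm F → Tm F
  | const f => const f
  | var n   => if n < d then var n else var (n + 1)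
  | app s t => app (lift d s) (lift d t)
  | lam s   => lam (lift (d + 1) s)

/-- Capture-avoiding substitution `t[k := u]` (de Bruijn). -/
def subst : Tm F → ℕ → Tm F → Tm F
  | const f, _, _ => const f
  | var n, k, u   => if n = k then u else if k < n then var (n - 1) else var n
  | app s t, k, u => app (subst s k u) (subst t k u)
  | lam s, k, u   => lam (subst s (k + 1) (lift 0 u))

end Tm

/-- Capture-avoiding application of a substitution `σ` to a term. -/
def applySubst {F : Type} (σ : ℕ → Tm F) : Tm F → Tm F
  | .const f => .const f
  | .var n   => σ n
  | .app s t => .app (applySubst σ s) (applySubst σ t)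
  | .lam s   => .lam (applySubst (fun n => match n with
      | 0 => Tm.var 0
      | m + 1 => Tm.lift 0 (σ m)) s)

/-- One-step beta-reduction. -/
inductive Beta {F : Type} : Tm F → Tm F → Prop
  | beta (s t : Tm F) : Beta (Tm.app (Tm.lam s) t) (Tm.subst s 0 t)
  | appL {s s'} (t) : Beta s s' → Beta (Tm.app s t) (Tm.app s' t)
  | appR (s) {t t'} : Beta t t' → Beta (Tm.app s t) (Tm.app s t')
  | lam {s s'} : Beta s s' → Beta (Tm.lam s) (Tm.lam s')

/-- Tait–Martin-Löf parallel beta-reduction. -/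
inductive PB {F : Type} : Tm F → Tm F → Prop
  | refl (t : Tm F) : PB t t
  | lam {s s'} : PB s s' → PB (Tm.lam s) (Tm.lam s')
  | app {s s' t t'} : PB s s' → PB t t' → PB (Tm.app s t) (Tm.app s' t')
  | beta {s s' t t'} : PB s s' → PB t t' →
      PB (Tm.app (Tm.lam s) t) (Tm.subst s' 0 t')


/-- Algebraic terms: no abstraction and no applied variable. -/
inductive Alg {F : Type} : Tm F → Prop
  | const (f : F) : Alg (Tm.const f)
  | var (n : ℕ) : Alg (Tm.var n)
  | app {s t} : Alg s → Alg t → (∀ n : ℕ, s ≠ Tm.var n) → Alg (Tm.app s t)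

/-- A conditional rewrite rule `d⃗ = c⃗ ⊃ l → r`. -/
structure Rule (F : Type) where
  lhs : Tm F
  rhs : Tm F
  conds : List (Tm F × Tm F)

/-- Joinability for a relation: `a ↓ b` iff `a →* c ←* b` for some `c`. -/
def Joinable {α : Type*} (r : α → α → Prop) (a b : α) : Prop :=
  ∃ c : α, Relation.ReflTransGen r a c ∧ Relation.ReflTransGen r b c

/-- Closure of a relation under the term formation rules (contexts). -/
inductive Ctx {F : Type} (base : Tm F → Tm F → Prop) : Tm F → Tm F → Prop
  | base {s t} : base s t → Ctx base s t
  | appL {s s'} (t) : Ctx base s s' → Ctx base (Tm.app s t) (Tm.app s' t)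
  | appR (s) {t t'} : Ctx base t t' → Ctx base (Tm.app s t) (Tm.app s t')
  | lam {s s'} : Ctx base s s' → Ctx base (Tm.lam s) (Tm.lam s')

/-- Root rewrite steps: rule instances whose instantiated conditions are
joinable for the relation `prev`. -/
def Aroot {F : Type} (R : Set (Rule F)) (prev : Tm F → Tm F → Prop)
    (s t : Tm F) : Prop :=
  ∃ ru ∈ R, ∃ σ : ℕ → Tm F,
    s = applySubst σ ru.lhs ∧ t = applySubst σ ru.rhs ∧
    ∀ dc ∈ ru.conds, Joinable prev (applySubst σ dc.1) (applySubst σ dc.2)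

/-- The level-`i` standard conditional rewrite relation `→_{A_i}`
(`→_{A_0} = ∅`, conditions at level `i+1` checked by `→_{A_i}`-joinability). -/
def Alevel {F : Type} (R : Set (Rule F)) : ℕ → Tm F → Tm F → Prop
  | 0 => fun _ _ => False
  | i + 1 => Ctx (Aroot R (Alevel R i))

/-- The nested parallel conditional rewrite relation `⇒_{A_i}`: smallest
reflexive parallel relation closed under abstraction, parallel application and
the rule `lσ ⇒_{A_i} rτ` whenever `lσ →_{A_i} rσ` and `σ ⇒_{A_i} τ`. -/
inductive APar {F : Type} (R : Set (Rule F)) (i : ℕ) : Tm F → Tm F → Prop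
  | refl (t : Tm F) : APar R i t t
  | app {s s' t t'} : APar R i s s' → APar R i t t' →
      APar R i (Tm.app s t) (Tm.app s' t')
  | lam {s s'} : APar R i s s' → APar R i (Tm.lam s) (Tm.lam s')
  | rule {ru : Rule F} {σ τ : ℕ → Tm F} : ru ∈ R →
      Alevel R i (applySubst σ ru.lhs) (applySubst σ ru.rhs) →
      (∀ n : ℕ, APar R i (σ n) (τ n)) →
      APar R i (applySubst σ ru.lhs) (applySubst τ ru.rhs)

/-- Applicative terms: no abstraction. -/
def Applicative {F : Type} : Tm F → Prop
  | .const _ => True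
  | .var _ => True
  | .app s t => Applicative s ∧ Applicative t
  | .lam _ => False

/-- Number of occurrences of the free variable (de Bruijn index) `n`. -/
def fvCount {F : Type} : Tm F → ℕ → ℕ
  | .const _, _ => 0
  | .var m, n => if m = n then 1 else 0
  | .app s t, n => fvCount s n + fvCount t n
  | .lam s, n => fvCount s (n + 1)

/-- Linear terms: every free variable occurs at most once. -/
def Linear {F : Type} (t : Tm F) : Prop := ∀ n : ℕ, fvCount t n ≤ 1

/-- Closed terms: no free variable. -/
def Closed {F : Type} (t : Tm F) : Prop := ∀ n : ℕ, fvCount t n = 0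

/-- A semi-closed, left-linear, right-applicative conditional rewrite system:
left-hand sides are non-variable linear algebraic terms, right-hand sides are
applicative, the `cᵢ` are closed algebraic terms, and all free variables of
`d⃗, c⃗, r` occur in `l`. -/
def SemiClosedLLRA {F : Type} (R : Set (Rule F)) : Prop :=
  ∀ ru ∈ R,
    Alg ru.lhs ∧ (∀ n : ℕ, ru.lhs ≠ Tm.var n) ∧ Linear ru.lhs ∧
    Applicative ru.rhs ∧
    (∀ dc ∈ ru.conds, Alg dc.2 ∧ Closed dc.2) ∧
    (∀ n : ℕ, 0 < fvCount ru.rhs n → 0 < fvCount ru.lhs n) ∧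
    (∀ dc ∈ ru.conds, ∀ n : ℕ,
      0 < fvCount dc.1 n + fvCount dc.2 n → 0 < fvCount ru.lhs n)

/-- The standard conditional rewrite relation `→_A = ∪ᵢ →_{A_i}`. -/
def ARel {F : Type} (R : Set (Rule F)) (s t : Tm F) : Prop :=
  ∃ i : ℕ, Alevel R i s t

/-!
Parallel β-reduction `PB` has a strip property against every level `→_{A_i}`: if `s →_{A_i} t`
and `PB s u`, then `u →*_{A_i} v` and `PB t v` for some `v`; this goes by induction on `i`.
For a root step `lσ → rσ`, since `l` is algebraic and linear, every `PB`-reduct of `lσ` is some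
`lτ` with `PB (σ n) (τ n)` for all `n`, and then `PB (rσ) (rτ)`. A condition `dσ ↓ c` survives
the passage to `τ`: the common reduct `e` is a reduct of the closed algebraic `c`, hence
applicative, hence `PB`-normal, so the strip property at level `i` turns `dσ →* e` into
`dτ →* e`. Steps inside contexts are handled by the closure of `→_{A_i}` under lifting and
substitution. As `Beta ⊆ PB ⊆ Beta*`, commutation of the reflexive-transitive closures is then
abstract rewriting.
-/

open Relation

namespace Tm

variable {F : Type}

theorem lift_lift (t : Tm F) {e d : ℕ} (h : e ≤ d) :
    lift e (lift d t) = lift (d + 1) (lift e t) := by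
  induction t generalizing e d with
  | const f => rfl
  | var n => grind [lift]
  | app s t ihs iht => simp only [lift, ihs h, iht h]
  | lam s ih => simp only [lift, ih (Nat.succ_le_succ h)]

theorem lift_subst (s : Tm F) {k d : ℕ} (u : Tm F) (h : k ≤ d) :
    lift d (subst s k u) = subst (lift (d + 1) s) k (lift d u) := by
  induction s generalizing k d u with
  | const f => rfl
  | var n => grind [subst, lift]
  | app a b iha ihb => simp only [subst, lift, iha u h, ihb u h]
  | lam a ih =>
    simp only [subst, lift, ih (lift 0 u) (Nat.succ_le_succ h), lift_lift u (Nat.zero_le d)]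

theorem subst_lift (t : Tm F) {e k : ℕ} (u : Tm F) (h : e ≤ k) :
    subst (lift e t) (k + 1) (lift e u) = lift e (subst t k u) := by
  induction t generalizing e k u with
  | const f => rfl
  | var n => grind [subst, lift]
  | app a b iha ihb => simp only [subst, lift, iha u h, ihb u h]
  | lam a ih =>
    simp only [subst, lift]
    rw [lift_lift u (Nat.zero_le e), ih _ (Nat.succ_le_succ h)]

end Tm

variable {F : Type}

theorem applySubst_congr (t : Tm F) {σ τ : ℕ → Tm F}
    (h : ∀ n, 0 < fvCount t n → σ n = τ n) : applySubst σ t = applySubst τ t := by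
  induction t generalizing σ τ with
  | const f => rfl
  | var n => exact h n (by simp [fvCount])
  | app a b iha ihb =>
    simp only [applySubst]
    rw [iha fun n hn => h n (by simp only [fvCount]; omega),
      ihb fun n hn => h n (by simp only [fvCount]; omega)]
  | lam a ih =>
    simp only [applySubst]
    congr 1
    refine ih fun n hn => ?_
    match n with
    | 0 => rfl
    | m + 1 => exact congrArg (Tm.lift 0) (h m (by simpa [fvCount] using hn))

theorem lift_applySubst (t : Tm F) (σ : ℕ → Tm F) (d : ℕ) :
    Tm.lift d (applySubst σ t) = applySubst (fun n => Tm.lift d (σ n)) t := by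
  induction t generalizing σ d with
  | const f => rfl
  | var n => rfl
  | app a b iha ihb => simp only [applySubst, Tm.lift, iha, ihb]
  | lam a ih =>
    simp only [applySubst, Tm.lift, ih]
    congr 1
    refine applySubst_congr a fun n _ => ?_
    match n with
    | 0 => simp [Tm.lift]
    | m + 1 => exact (Tm.lift_lift (σ m) (Nat.zero_le d)).symm

theorem subst_applySubst (t : Tm F) (σ : ℕ → Tm F) (k : ℕ) (u : Tm F) :
    Tm.subst (applySubst σ t) k u = applySubst (fun n => Tm.subst (σ n) k u) t := by
  induction t generalizing σ k u with
  | const f => rfl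
  | var n => rfl
  | app a b iha ihb => simp only [applySubst, Tm.subst, iha, ihb]
  | lam a ih =>
    simp only [applySubst, Tm.subst, ih]
    congr 1
    refine applySubst_congr a fun n _ => ?_
    match n with
    | 0 => simp [Tm.subst]
    | m + 1 => exact Tm.subst_lift (σ m) u (Nat.zero_le k)

theorem pb_lift {s t : Tm F} (h : PB s t) (d : ℕ) : PB (Tm.lift d s) (Tm.lift d t) := by
  induction h generalizing d with
  | refl t => exact .refl _
  | lam _ ih => exact .lam (ih (d + 1))
  | app _ _ ihs iht => exact .app (ihs d) (iht d)
  | @beta s s' t t' _ _ ihs iht =>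
    rw [Tm.lift, Tm.lift_subst s' t' (Nat.zero_le d)]
    exact .beta (ihs (d + 1)) (iht d)

theorem pb_applySubst (t : Tm F) {σ τ : ℕ → Tm F} (h : ∀ n, PB (σ n) (τ n)) :
    PB (applySubst σ t) (applySubst τ t) := by
  induction t generalizing σ τ with
  | const f => exact .refl _
  | var n => exact h n
  | app a b iha ihb => exact .app (iha h) (ihb h)
  | lam a ih =>
    refine .lam (ih fun n => ?_)
    match n with
    | 0 => exact .refl _
    | m + 1 => exact pb_lift (h m) 0

theorem pb_of_beta {s t : Tm F} (h : Beta s t) : PB s t := by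
  induction h with
  | beta s t => exact .beta (.refl s) (.refl t)
  | appL t _ ih => exact .app ih (.refl t)
  | appR s _ ih => exact .app (.refl s) ih
  | lam _ ih => exact .lam ih

theorem reflTransGen_beta_of_pb {s t : Tm F} (h : PB s t) : ReflTransGen Beta s t := by
  induction h with
  | refl t => exact .refl
  | lam _ ih => exact ih.lift Tm.lam fun _ _ => Beta.lam
  | @app s s' t t' _ _ iha ihb =>
    exact (iha.lift (Tm.app · t) fun _ _ => Beta.appL t).trans
      (ihb.lift (Tm.app s') fun _ _ => Beta.appR s')
  | @beta s s' t t' _ _ ihs iht =>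
    have hfun : ReflTransGen Beta (.lam s) (.lam s') := ihs.lift Tm.lam fun _ _ => Beta.lam
    exact ((hfun.lift (Tm.app · t) fun _ _ => Beta.appL t).trans
      (iht.lift (Tm.app (.lam s')) fun _ _ => Beta.appR _)).tail (.beta s' t')

theorem pb_const_inv {f : F} {u : Tm F} (h : PB (.const f) u) : u = .const f := by
  cases h; rfl

theorem pb_lam_inv {s u : Tm F} (h : PB (.lam s) u) : ∃ s', u = .lam s' ∧ PB s s' := by
  cases h with
  | refl => exact ⟨s, rfl, .refl s⟩
  | lam hs => exact ⟨_, rfl, hs⟩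

theorem pb_app_inv {a b u : Tm F} (ha : ∀ x, a ≠ .lam x) (h : PB (.app a b) u) :
    ∃ a' b', u = .app a' b' ∧ PB a a' ∧ PB b b' := by
  cases h with
  | refl => exact ⟨a, b, rfl, .refl a, .refl b⟩
  | app ha hb => exact ⟨_, _, rfl, ha, hb⟩
  | beta _ _ => exact absurd rfl (ha _)

theorem pb_eq_of_applicative {e u : Tm F} (h : PB e u) (he : Applicative e) : u = e := by
  induction h with
  | refl t => rfl
  | lam _ _ => exact he.elim
  | app _ _ iha ihb => rw [iha he.1, ihb he.2]
  | beta _ _ _ _ => exact he.1.elim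

theorem Alg.applicative {t : Tm F} (h : Alg t) : Applicative t := by
  induction h with
  | const f => trivial
  | var n => trivial
  | app _ _ _ iha ihb => exact ⟨iha, ihb⟩

theorem applicative_applySubst {t : Tm F} {σ : ℕ → Tm F} (ht : Applicative t)
    (hσ : ∀ n, 0 < fvCount t n → Applicative (σ n)) : Applicative (applySubst σ t) := by
  induction t with
  | const f => trivial
  | var n => exact hσ n (by simp [fvCount])
  | app a b iha ihb =>
    exact ⟨iha ht.1 fun n hn => hσ n (by simp only [fvCount]; omega),
      ihb ht.2 fun n hn => hσ n (by simp only [fvCount]; omega)⟩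
  | lam a _ => exact ht.elim

theorem Alg.applicative_of_applySubst {l : Tm F} (hl : Alg l) {σ : ℕ → Tm F}
    (h : Applicative (applySubst σ l)) {n : ℕ} (hn : 0 < fvCount l n) : Applicative (σ n) := by
  induction hl with
  | const f => simp [fvCount] at hn
  | var m =>
    obtain rfl : m = n := by by_contra hmn; simp [fvCount, hmn] at hn
    exact h
  | @app p q _ _ _ ihp ihq =>
    simp only [fvCount] at hn
    by_cases hp : 0 < fvCount p n
    · exact ihp h.1 hp
    · exact ihq h.2 (by omega)

theorem Alg.applySubst_of_closed {c : Tm F} (hc : Alg c) (hcl : Closed c) (σ : ℕ → Tm F) :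
    applySubst σ c = c := by
  induction hc with
  | const f => rfl
  | var n => simpa [fvCount] using hcl n
  | @app p q _ _ _ ihp ihq =>
    have hp : Closed p := fun n => by have := hcl n; simp only [fvCount] at this; omega
    have hq : Closed q := fun n => by have := hcl n; simp only [fvCount] at this; omega
    simp only [applySubst, ihp hp, ihq hq]

theorem Alg.applySubst_ne_lam {l : Tm F} (hl : Alg l) (hnv : ∀ n, l ≠ .var n)
    (σ : ℕ → Tm F) (x : Tm F) : applySubst σ l ≠ .lam x := by
  cases hl with
  | const f => simp [applySubst]
  | var n => exact absurd rfl (hnv n)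
  | app _ _ _ => simp [applySubst]

theorem Linear.of_app {a b : Tm F} (h : Linear (.app a b)) :
    Linear a ∧ Linear b ∧ ∀ n, fvCount a n = 0 ∨ fvCount b n = 0 := by
  refine ⟨fun n => ?_, fun n => ?_, fun n => ?_⟩ <;>
    (have := h n; simp only [fvCount] at this; omega)

theorem Alg.exists_eq_applySubst_of_pb {l : Tm F} (hl : Alg l) (hlin : Linear l)
    {σ : ℕ → Tm F} {u : Tm F} (h : PB (applySubst σ l) u) :
    ∃ τ : ℕ → Tm F, u = applySubst τ l ∧ ∀ n, PB (σ n) (τ n) := by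
  induction hl generalizing u with
  | const f => exact ⟨σ, pb_const_inv h, fun n => .refl _⟩
  | var m =>
    refine ⟨Function.update σ m u, by simp [applySubst], fun n => ?_⟩
    by_cases hnm : n = m
    · subst hnm; simpa [applySubst] using h
    · simpa [hnm] using PB.refl (σ n)
  | @app p q hp _ hpnv ihp ihq =>
    obtain ⟨hlinp, hlinq, hdisj⟩ := hlin.of_app
    obtain ⟨p', q', rfl, hpp', hqq'⟩ := pb_app_inv (hp.applySubst_ne_lam hpnv σ) h
    obtain ⟨τp, rfl, hτp⟩ := ihp hlinp hpp'
    obtain ⟨τq, rfl, hτq⟩ := ihq hlinq hqq'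
    refine ⟨fun n => if 0 < fvCount p n then τp n else τq n, ?_, fun n => ?_⟩
    · simp only [applySubst]
      congr 1
      · exact applySubst_congr p fun n hn => by simp [hn]
      · refine applySubst_congr q fun n hn => ?_
        have : ¬ 0 < fvCount p n := by rcases hdisj n with h' | h' <;> omega
        simp [this]
    · by_cases hpn : 0 < fvCount p n
      · simpa [hpn] using hτp n
      · simpa [hpn] using hτq n

theorem Joinable.map {α β : Type*} {r : α → α → Prop} {p : β → β → Prop} (f : α → β)
    (hf : ∀ a b, r a b → p (f a) (f b)) {a b : α} (h : Joinable r a b) :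
    Joinable p (f a) (f b) :=
  let ⟨c, hac, hbc⟩ := h
  ⟨f c, hac.lift f hf, hbc.lift f hf⟩

section Commute

variable {α : Type*} {r p : α → α → Prop}

theorem reflTransGen_strip (h : ∀ {s t u}, r s t → p s u → ∃ v, ReflTransGen r u v ∧ p t v)
    {s t u : α} (hst : ReflTransGen r s t) (hsu : p s u) : ∃ v, ReflTransGen r u v ∧ p t v := by
  induction hst with
  | refl => exact ⟨u, .refl, hsu⟩
  | tail _ hbc ih =>
    obtain ⟨v, huv, hbv⟩ := ih
    obtain ⟨w, hvw, hcw⟩ := h hbc hbv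
    exact ⟨w, huv.trans hvw, hcw⟩

theorem reflTransGen_commute (h : ∀ {s t u}, r s t → p s u → ∃ v, ReflTransGen r u v ∧ p t v)
    {s t u : α} (hst : ReflTransGen r s t) (hsu : ReflTransGen p s u) :
    ∃ v, ReflTransGen r u v ∧ ReflTransGen p t v := by
  induction hsu with
  | refl => exact ⟨t, hst, .refl⟩
  | tail _ hbc ih =>
    obtain ⟨v, hbv, htv⟩ := ih
    obtain ⟨w, hcw, hvw⟩ := reflTransGen_strip h hbv hbc
    exact ⟨w, hcw, htv.tail hvw⟩

end Commute

structure IsStructural {P : Type} (φ : P → Tm F → Tm F) (next : P → P) : Prop where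
  map_app : ∀ p a b, φ p (.app a b) = .app (φ p a) (φ p b)
  map_lam : ∀ p a, φ p (.lam a) = .lam (φ (next p) a)
  map_applySubst : ∀ p σ t, φ p (applySubst σ t) = applySubst (fun n => φ p (σ n)) t

theorem isStructural_lift : IsStructural (F := F) Tm.lift (· + 1) where
  map_app _ _ _ := rfl
  map_lam _ _ := rfl
  map_applySubst p σ t := lift_applySubst t σ p

theorem isStructural_subst :
    IsStructural (fun (p : ℕ × Tm F) t => Tm.subst t p.1 p.2) fun p => (p.1 + 1, Tm.lift 0 p.2) where
  map_app _ _ _ := rfl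
  map_lam _ _ := rfl
  map_applySubst p σ t := subst_applySubst t σ p.1 p.2

namespace Ctx

variable {B : Tm F → Tm F → Prop}

theorem map {P : Type} {φ : P → Tm F → Tm F} {next : P → P} (hφ : IsStructural φ next)
    (hB : ∀ p {x y}, B x y → B (φ p x) (φ p y)) {x y : Tm F} (h : Ctx B x y) (p : P) :
    Ctx B (φ p x) (φ p y) := by
  induction h generalizing p with
  | base h => exact .base (hB p h)
  | appL t _ ih => rw [hφ.map_app, hφ.map_app]; exact .appL _ (ih p)
  | appR s _ ih => rw [hφ.map_app, hφ.map_app]; exact .appR _ (ih p)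
  | lam _ ih => rw [hφ.map_lam, hφ.map_lam]; exact .lam (ih (next p))

theorem reflTransGen_appL {a a' : Tm F} (t : Tm F) (h : ReflTransGen (Ctx B) a a') :
    ReflTransGen (Ctx B) (.app a t) (.app a' t) :=
  h.lift (Tm.app · t) fun _ _ => .appL t

theorem reflTransGen_appR (s : Tm F) {t t' : Tm F} (h : ReflTransGen (Ctx B) t t') :
    ReflTransGen (Ctx B) (.app s t) (.app s t') :=
  h.lift (Tm.app s) fun _ _ => .appR s

theorem reflTransGen_lam {s s' : Tm F} (h : ReflTransGen (Ctx B) s s') :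
    ReflTransGen (Ctx B) (.lam s) (.lam s') :=
  h.lift Tm.lam fun _ _ => .lam

theorem lam_inv (hB : ∀ a t, ¬ B (.lam a) t) {a t : Tm F} (h : Ctx B (.lam a) t) :
    ∃ a', t = .lam a' ∧ Ctx B a a' := by
  cases h with
  | base h => exact absurd h (hB _ _)
  | lam h => exact ⟨_, rfl, h⟩

theorem reflTransGen_lam_inv (hB : ∀ a t, ¬ B (.lam a) t) {a v : Tm F}
    (h : ReflTransGen (Ctx B) (.lam a) v) : ∃ w, v = .lam w ∧ ReflTransGen (Ctx B) a w := by
  induction h with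
  | refl => exact ⟨a, rfl, .refl⟩
  | tail _ hvw ih =>
    obtain ⟨w, rfl, haw⟩ := ih
    obtain ⟨w', rfl, hww'⟩ := lam_inv hB hvw
    exact ⟨w', rfl, haw.tail hww'⟩

theorem reflTransGen_subst_right (hlift : ∀ d {x y}, Ctx B x y → Ctx B (Tm.lift d x) (Tm.lift d y))
    (a : Tm F) {k : ℕ} {x y : Tm F} (h : Ctx B x y) :
    ReflTransGen (Ctx B) (Tm.subst a k x) (Tm.subst a k y) := by
  induction a generalizing k x y with
  | const f => exact .refl
  | var n =>
    simp only [Tm.subst]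
    split_ifs
    · exact .single h
    all_goals exact .refl
  | app p q ihp ihq => exact (reflTransGen_appL _ (ihp h)).trans (reflTransGen_appR _ (ihq h))
  | lam p ihp => exact reflTransGen_lam (ihp (hlift 0 h))

theorem applicative (hB : ∀ {s t}, B s t → Applicative s → Applicative t) {s t : Tm F}
    (h : Ctx B s t) (hs : Applicative s) : Applicative t := by
  induction h with
  | base h => exact hB h hs
  | appL _ _ ih => exact ⟨ih hs.1, hs.2⟩
  | appR _ _ ih => exact ⟨hs.1, ih hs.2⟩
  | lam _ _ => exact hs.elim

theorem strip_pb (hB : ∀ a t, ¬ B (.lam a) t)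
    (hlift : ∀ d {x y}, Ctx B x y → Ctx B (Tm.lift d x) (Tm.lift d y))
    (hsubst : ∀ k u {x y}, Ctx B x y → Ctx B (Tm.subst x k u) (Tm.subst y k u))
    (hroot : ∀ {s t u}, B s t → PB s u → ∃ v, B u v ∧ PB t v)
    {s t u : Tm F} (h : Ctx B s t) (hpb : PB s u) :
    ∃ v, ReflTransGen (Ctx B) u v ∧ PB t v := by
  induction h generalizing u with
  | base hst =>
    obtain ⟨v, huv, htv⟩ := hroot hst hpb
    exact ⟨v, .single (.base huv), htv⟩
  | @appL a a' b hC ih =>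
    cases hpb with
    | refl => exact ⟨_, .single (.appL b hC), .refl _⟩
    | app ha hb =>
      obtain ⟨v, hv, hpv⟩ := ih ha
      exact ⟨_, reflTransGen_appL _ hv, .app hpv hb⟩
    | @beta a₀ a₁ _ b₁ ha hb =>
      obtain ⟨a₀', rfl, -⟩ := lam_inv hB hC
      obtain ⟨v, hv, hpv⟩ := ih (.lam ha)
      obtain ⟨w, rfl, hw⟩ := reflTransGen_lam_inv hB hv
      obtain ⟨w', hww', hpw⟩ := pb_lam_inv hpv
      cases hww'
      exact ⟨Tm.subst w 0 b₁, hw.lift (Tm.subst · 0 b₁) fun _ _ => hsubst 0 b₁, .beta hpw hb⟩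
  | @appR a b b' hC ih =>
    cases hpb with
    | refl => exact ⟨_, .single (.appR a hC), .refl _⟩
    | app ha hb =>
      obtain ⟨v, hv, hpv⟩ := ih hb
      exact ⟨_, reflTransGen_appR _ hv, .app ha hpv⟩
    | @beta a₀ a₁ _ _ ha hb =>
      obtain ⟨v, hv, hpv⟩ := ih hb
      exact ⟨Tm.subst a₁ 0 v, hv.lift' (Tm.subst a₁ 0) fun _ _ => reflTransGen_subst_right hlift a₁, .beta ha hpv⟩
  | @lam a a' hC ih =>
    cases hpb with
    | refl => exact ⟨_, .single (.lam hC), .refl _⟩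
    | lam ha =>
      obtain ⟨v, hv, hpv⟩ := ih ha
      exact ⟨_, reflTransGen_lam hv, .lam hpv⟩

end Ctx

namespace Aroot

variable {R : Set (Rule F)} {prev : Tm F → Tm F → Prop}

theorem map {P : Type} {φ : P → Tm F → Tm F} {next : P → P} (hφ : IsStructural φ next)
    (hprev : ∀ p {x y}, prev x y → prev (φ p x) (φ p y)) {x y : Tm F} (h : Aroot R prev x y)
    (p : P) : Aroot R prev (φ p x) (φ p y) := by
  obtain ⟨ru, hru, σ, rfl, rfl, hcond⟩ := h
  refine ⟨ru, hru, fun n => φ p (σ n), hφ.map_applySubst .., hφ.map_applySubst .., fun dc hdc => ?_⟩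
  rw [← hφ.map_applySubst, ← hφ.map_applySubst]
  exact (hcond dc hdc).map (φ p) fun _ _ => hprev p

theorem not_lam (hR : SemiClosedLLRA R) (a t : Tm F) : ¬ Aroot R prev (.lam a) t := by
  rintro ⟨ru, hru, σ, hl, -⟩
  obtain ⟨hAlg, hnv, -⟩ := hR ru hru
  exact hAlg.applySubst_ne_lam hnv σ a hl.symm

theorem applicative (hR : SemiClosedLLRA R) {s t : Tm F} (h : Aroot R prev s t)
    (hs : Applicative s) : Applicative t := by
  obtain ⟨ru, hru, σ, rfl, rfl, -⟩ := h
  obtain ⟨hAlg, -, -, hr, -, hvars, -⟩ := hR ru hru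
  exact applicative_applySubst hr fun n hn => hAlg.applicative_of_applySubst hs (hvars n hn)

theorem strip_pb (hR : SemiClosedLLRA R)
    (hprev : ∀ {s t u}, ReflTransGen prev s t → PB s u → ∃ v, ReflTransGen prev u v ∧ PB t v)
    (happ : ∀ {s t}, ReflTransGen prev s t → Applicative s → Applicative t)
    {s t u : Tm F} (h : Aroot R prev s t) (hpb : PB s u) : ∃ v, Aroot R prev u v ∧ PB t v := by
  obtain ⟨ru, hru, σ, rfl, rfl, hcond⟩ := h
  obtain ⟨hAlg, -, hlin, -, hconds, -, -⟩ := hR ru hru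
  obtain ⟨τ, rfl, hστ⟩ := hAlg.exists_eq_applySubst_of_pb hlin hpb
  refine ⟨_, ⟨ru, hru, τ, rfl, rfl, fun dc hdc => ?_⟩, pb_applySubst ru.rhs hστ⟩
  obtain ⟨hcAlg, hcClosed⟩ := hconds dc hdc
  obtain ⟨e, hde, hce⟩ := hcond dc hdc
  rw [hcAlg.applySubst_of_closed hcClosed] at hce ⊢
  obtain ⟨e', hde', hee'⟩ := hprev hde (pb_applySubst dc.1 hστ)
  -- `e` is a reduct of the algebraic `c`, hence applicative, hence normal for `PB`.
  rw [pb_eq_of_applicative hee' (happ hce hcAlg.applicative)] at hde'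
  exact ⟨e, hde', hce⟩

end Aroot

namespace Alevel

variable {R : Set (Rule F)}

theorem map {P : Type} {φ : P → Tm F → Tm F} {next : P → P} (hφ : IsStructural φ next) :
    ∀ i {x y : Tm F}, Alevel R i x y → ∀ p, Alevel R i (φ p x) (φ p y)
  | 0, _, _, h, _ => h.elim
  | i + 1, _, _, h, p =>
    Ctx.map (B := Aroot R (Alevel R i)) hφ
      (fun p _ _ hroot => Aroot.map hφ (fun p _ _ hprev => map hφ i hprev p) hroot p) h p

theorem applicative (hR : SemiClosedLLRA R) :
    ∀ i {s t : Tm F}, Alevel R i s t → Applicative s → Applicative t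
  | 0, _, _, h, _ => h.elim
  | _ + 1, _, _, h, hs => Ctx.applicative (Aroot.applicative hR) h hs

theorem reflTransGen_applicative (hR : SemiClosedLLRA R) {i : ℕ} {s t : Tm F}
    (h : ReflTransGen (Alevel R i) s t) (hs : Applicative s) : Applicative t := by
  induction h with
  | refl => exact hs
  | tail _ hbc ih => exact applicative hR i hbc ih

theorem strip_pb (hR : SemiClosedLLRA R) :
    ∀ i {s t u : Tm F}, Alevel R i s t → PB s u → ∃ v, ReflTransGen (Alevel R i) u v ∧ PB t v
  | 0, _, _, _, h, _ => h.elim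
  | i + 1, _, _, _, h, hpb =>
    Ctx.strip_pb (Aroot.not_lam hR) (fun d _ _ h => map isStructural_lift (i + 1) h d)
      (fun k u _ _ h => map isStructural_subst (i + 1) h (k, u))
      (Aroot.strip_pb hR (reflTransGen_strip (strip_pb hR i)) (reflTransGen_applicative hR)) h hpb

end Alevel

theorem ARel.strip_pb {R : Set (Rule F)} (hR : SemiClosedLLRA R) {s t u : Tm F}
    (h : ARel R s t) (hpb : PB s u) : ∃ v, ReflTransGen (ARel R) u v ∧ PB t v :=
  let ⟨i, h⟩ := h
  let ⟨v, huv, htv⟩ := Alevel.strip_pb hR i h hpb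
  ⟨v, ReflTransGen.mono (fun _ _ h => ⟨i, h⟩) _ _ huv, htv⟩

/-- for a semi-closed, left-linear, right-applicative conditional
system, `→A*` and `→β*` commute: `←β* ; →A* ⊆ →A* ; ←β*`. -/
theorem aStar_commutes_betaStar {F : Type} (R : Set (Rule F))
    (hR : SemiClosedLLRA R) {s t u : Tm F}
    (hb : Relation.ReflTransGen Beta s u)
    (ha : Relation.ReflTransGen (ARel R) s t) :
    ∃ v : Tm F, Relation.ReflTransGen (ARel R) u v ∧
      Relation.ReflTransGen Beta t v := by
  obtain ⟨v, huv, htv⟩ :=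
    reflTransGen_commute (ARel.strip_pb hR) ha (ReflTransGen.mono (fun _ _ => pb_of_beta) _ _ hb)
  exact ⟨v, huv, reflTransGen_closed (fun _ _ => reflTransGen_beta_of_pb) _ _ htv⟩

end CondConf
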